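/- arXiv:2402.19374 — 2 statements merged into one kernel-verified Lean document; each statement's English description precedes it below -/
import Mathlib

section
/- Let R be a ring and L a Lie ideal with I([L, L]) = R (the ideal generated by [L,L] is all of R). Then [L, R] = [R, R] and R = [R, R]², the additive subgroup generated by products of two commutators. -/
/-!
Since `L` is a Lie ideal, `L + L²` is closed under `[·, R]`, and `[a,b] r = [a, b r] - b [a, r]`
puts `[L,L] R` inside it; writing `r x s = x (s r) - [x s, r]` then shows that `L + L²` contains
the ideal generated by `[L,L]`, i.e. all of `R`. As `[L + L², R] ⊆ [L, R]`, this gives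
`[L, R] = [R, R]`.

For the second claim write `1 = ∑ cᵢ kᵢ` with commutators `kᵢ` (`i < n`) and let
`M = [R,R] + [R,R]²`. Modulo `M` every product may be rotated cyclically, commutators may be
moved freely inside a product (`w [k, v] t ∈ M` for `k ∈ [R,R]`), and `k k z ∈ [R,R]²` for a
commutator `k`. Multiplying `z` by `1 = ∑ cᵢ kᵢ` on the left `n + 1` times and rotating each
`cᵢ` to the right end expresses `z` modulo `M` through words of length `n + 1` in the `kᵢ`; each
has a repeated letter, hence lies in `M`. So `R = M`, and finally `[M, M] ⊆ [R,R]²` gives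
`R = [R,R]²`.
-/

/-- The additive subgroup generated by commutators `a * b - b * a` with `a ∈ A`, `b ∈ B`. -/
def lieBr {R : Type*} [Ring R] (A B : Set R) : AddSubgroup R :=
  AddSubgroup.closure {z : R | ∃ a ∈ A, ∃ b ∈ B, z = a * b - b * a}

open Set

section Commutators

variable {R : Type*} [Ring R]

/-- `[R,R]²`. -/
def lieSq (R : Type*) [Ring R] : AddSubgroup R :=
  AddSubgroup.closure
    {z : R | ∃ u ∈ lieBr (univ : Set R) univ, ∃ v ∈ lieBr (univ : Set R) univ, z = u * v}

/-- `[R,R] + [R,R]²`. -/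
def lieAddLieSq (R : Type*) [Ring R] : AddSubgroup R :=
  lieBr (univ : Set R) univ ⊔ lieSq R

lemma commutator_mem_lieBr {A B : Set R} {a b : R} (ha : a ∈ A) (hb : b ∈ B) :
    a * b - b * a ∈ lieBr A B :=
  AddSubgroup.subset_closure ⟨a, ha, b, hb, rfl⟩

lemma commutator_mem_lieBr_univ (a b : R) : a * b - b * a ∈ lieBr (univ : Set R) univ :=
  commutator_mem_lieBr (mem_univ a) (mem_univ b)

lemma mul_mem_lieSq {u v : R} (hu : u ∈ lieBr (univ : Set R) univ)
    (hv : v ∈ lieBr (univ : Set R) univ) : u * v ∈ lieSq R :=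
  AddSubgroup.subset_closure ⟨u, hu, v, hv, rfl⟩

lemma commutator_mem_lieAddLieSq (a b : R) : a * b - b * a ∈ lieAddLieSq R :=
  AddSubgroup.mem_sup_left (commutator_mem_lieBr_univ a b)

lemma lieSq_le_lieAddLieSq : lieSq R ≤ lieAddLieSq R := le_sup_right

def commutatorRight (y : R) : R →+ R :=
  AddMonoidHom.mulRight y - AddMonoidHom.mulLeft y

lemma commutator_mem_of_mem_closure_left {A : Set R} {S : AddSubgroup R} {x y : R}
    (h : ∀ a ∈ A, a * y - y * a ∈ S) (hx : x ∈ AddSubgroup.closure A) :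
    x * y - y * x ∈ S :=
  (AddSubgroup.closure_le (S.comap (commutatorRight y))).2 h hx

lemma commutator_mem_of_mem_closure {A B : Set R} {S : AddSubgroup R} {x y : R}
    (h : ∀ a ∈ A, ∀ b ∈ B, a * b - b * a ∈ S) (hx : x ∈ AddSubgroup.closure A)
    (hy : y ∈ AddSubgroup.closure B) : x * y - y * x ∈ S := by
  refine commutator_mem_of_mem_closure_left (fun a ha => ?_) hx
  rw [← neg_sub]
  refine neg_mem (commutator_mem_of_mem_closure_left (fun b hb => ?_) hy)
  rw [← neg_sub]
  exact neg_mem (h a ha b hb)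

lemma mem_of_mem_span_closure {g : Set R} {T : AddSubgroup R}
    (h : ∀ x ∈ g, ∀ r t : R, r * x * t ∈ T) {z : R}
    (hz : z ∈ TwoSidedIdeal.span (AddSubgroup.closure g : Set R)) : z ∈ T := by
  rw [TwoSidedIdeal.mem_span_iff_mem_addSubgroup_closure] at hz
  refine (AddSubgroup.closure_le T).2 ?_ hz
  rintro _ ⟨_, ⟨r, -, x, hx, rfl⟩, t, -, rfl⟩
  exact (AddSubgroup.closure_le
    (T.comap ((AddMonoidHom.mulRight t).comp (AddMonoidHom.mulLeft r)))).2
    (fun y hy => h y hy r t) hx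

end Commutators

section LieIdeal

variable {R : Type*} [Ring R] {L : AddSubgroup R}

/-- `L + L²`. -/
def addSq (L : AddSubgroup R) : AddSubgroup R :=
  AddSubgroup.closure ((L : Set R) ∪ {z : R | ∃ a ∈ L, ∃ b ∈ L, z = a * b})

lemma mem_addSq_of_mem {a : R} (ha : a ∈ L) : a ∈ addSq L :=
  AddSubgroup.subset_closure (Or.inl ha)

lemma mul_mem_addSq {a b : R} (ha : a ∈ L) (hb : b ∈ L) : a * b ∈ addSq L :=
  AddSubgroup.subset_closure (Or.inr ⟨a, ha, b, hb, rfl⟩)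

lemma commutator_mem_addSq (hL : ∀ x ∈ L, ∀ r : R, x * r - r * x ∈ L) {x : R}
    (hx : x ∈ addSq L) (r : R) : x * r - r * x ∈ addSq L := by
  refine commutator_mem_of_mem_closure_left ?_ hx
  rintro _ (ha | ⟨a, ha, b, hb, rfl⟩)
  · exact mem_addSq_of_mem (hL _ ha r)
  · have h : a * b * r - r * (a * b) = a * (b * r - r * b) + (a * r - r * a) * b := by
      noncomm_ring
    rw [h]
    exact add_mem (mul_mem_addSq ha (hL b hb r)) (mul_mem_addSq (hL a ha r) hb)

lemma commutator_mul_mem_addSq (hL : ∀ x ∈ L, ∀ r : R, x * r - r * x ∈ L) {a b : R}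
    (ha : a ∈ L) (hb : b ∈ L) (r : R) : (a * b - b * a) * r ∈ addSq L := by
  have h : (a * b - b * a) * r = (a * (b * r) - b * r * a) - b * (a * r - r * a) := by
    noncomm_ring
  rw [h]
  exact sub_mem (mem_addSq_of_mem (hL a ha _)) (mul_mem_addSq hb (hL a ha r))

lemma mul_commutator_mul_mem_addSq (hL : ∀ x ∈ L, ∀ r : R, x * r - r * x ∈ L) {a b : R}
    (ha : a ∈ L) (hb : b ∈ L) (r s : R) : r * (a * b - b * a) * s ∈ addSq L := by
  have h : r * (a * b - b * a) * s
      = (a * b - b * a) * (s * r) - ((a * b - b * a) * s * r - r * ((a * b - b * a) * s)) := by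
    noncomm_ring
  rw [h]
  exact sub_mem (commutator_mul_mem_addSq hL ha hb _)
    (commutator_mem_addSq hL (commutator_mul_mem_addSq hL ha hb s) r)

lemma commutator_mem_lieBr_of_mem_addSq {x : R} (hx : x ∈ addSq L) (y : R) :
    x * y - y * x ∈ lieBr (L : Set R) univ := by
  refine commutator_mem_of_mem_closure_left ?_ hx
  rintro _ (ha | ⟨a, ha, b, hb, rfl⟩)
  · exact commutator_mem_lieBr ha (mem_univ y)
  · have h : a * b * y - y * (a * b)
        = (a * (b * y) - b * y * a) + (b * (y * a) - y * a * b) := by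
      noncomm_ring
    rw [h]
    exact add_mem (commutator_mem_lieBr ha (mem_univ _)) (commutator_mem_lieBr hb (mem_univ _))

lemma lieBr_eq_lieBr_univ (hL : ∀ x ∈ L, ∀ r : R, x * r - r * x ∈ L)
    (hspan : TwoSidedIdeal.span (lieBr (L : Set R) (L : Set R) : Set R) = ⊤) :
    lieBr (L : Set R) univ = lieBr (univ : Set R) univ := by
  have hR (x : R) : x ∈ addSq L := by
    have hx : x ∈ TwoSidedIdeal.span (lieBr (L : Set R) (L : Set R) : Set R) := by
      simp [hspan]
    refine mem_of_mem_span_closure ?_ hx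
    rintro _ ⟨a, ha, b, hb, rfl⟩ r s
    exact mul_commutator_mul_mem_addSq hL ha hb r s
  refine le_antisymm (AddSubgroup.closure_mono ?_) ((AddSubgroup.closure_le _).2 ?_)
  · rintro _ ⟨a, -, b, -, rfl⟩
    exact ⟨a, mem_univ a, b, mem_univ b, rfl⟩
  · rintro _ ⟨x, -, y, -, rfl⟩
    exact commutator_mem_lieBr_of_mem_addSq (hR x) y

end LieIdeal

section IdealOfCommutators

variable {R : Type*} [Ring R]

lemma mul_commutator_mul_mem_lieAddLieSq {k : R} (hk : k ∈ lieBr (univ : Set R) univ)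
    (w v t : R) : w * (k * v - v * k) * t ∈ lieAddLieSq R := by
  have h : w * (k * v - v * k) * t
      = (w * ((k * v - v * k) * t) - (k * v - v * k) * t * w)
        + k * (v * (t * w) - t * w * v) - (v * (k * t * w) - k * t * w * v) := by
    noncomm_ring
  rw [h]
  refine sub_mem (add_mem (commutator_mem_lieAddLieSq _ _) ?_) (commutator_mem_lieAddLieSq _ _)
  exact lieSq_le_lieAddLieSq (mul_mem_lieSq hk (commutator_mem_lieBr_univ _ _))

lemma commutator_mul_self_mul_mem_lieSq (a b z : R) :
    (a * b - b * a) * (a * b - b * a) * z ∈ lieSq R := by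
  have h : (a * b - b * a) * (a * b - b * a) * z
      = (a * b - b * a) * (a * (b * z) - b * z * a)
        - (a * b * b - b * (a * b)) * (a * z - z * a) := by
    noncomm_ring
  rw [h]
  exact sub_mem (mul_mem_lieSq (commutator_mem_lieBr_univ _ _) (commutator_mem_lieBr_univ _ _))
    (mul_mem_lieSq (commutator_mem_lieBr_univ _ _) (commutator_mem_lieBr_univ _ _))

section Words

variable {ι : Type*} {F : ι → R}

lemma perm_map_prod_sub_mem (hF : ∀ i, F i ∈ lieBr (univ : Set R) univ) {σ τ : List ι}
    (h : σ.Perm τ) (w t : R) :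
    w * (σ.map F).prod * t - w * (τ.map F).prod * t ∈ lieAddLieSq R := by
  induction h generalizing w with
  | nil => simp
  | cons i _ ih => simpa only [List.map_cons, List.prod_cons, mul_assoc] using ih (w * F i)
  | swap i j σ =>
    have h : w * (F j * (F i * (σ.map F).prod)) * t - w * (F i * (F j * (σ.map F).prod)) * t
        = w * (F j * F i - F i * F j) * ((σ.map F).prod * t) := by
      noncomm_ring
    simpa only [List.map_cons, List.prod_cons, h] using
      mul_commutator_mul_mem_lieAddLieSq (hF j) _ _ _
  | trans _ _ ih₁ ih₂ => simpa only [sub_add_sub_cancel] using add_mem (ih₁ w) (ih₂ w)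

lemma map_prod_mul_mem_of_not_nodup (hF : ∀ i, ∃ a b : R, F i = a * b - b * a)
    {σ : List ι} (hσ : ¬σ.Nodup) (z : R) : (σ.map F).prod * z ∈ lieAddLieSq R := by
  obtain ⟨i, hi⟩ : ∃ i, [i, i].Sublist σ := by simpa [List.nodup_iff_sublist] using hσ
  obtain ⟨τ, hτ⟩ := hi.exists_perm_append
  have hFK (j : ι) : F j ∈ lieBr (univ : Set R) univ := by
    obtain ⟨a, b, hab⟩ := hF j
    exact hab ▸ commutator_mem_lieBr_univ a b
  have hsq : ((i :: i :: τ).map F).prod * z ∈ lieAddLieSq R := by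
    obtain ⟨a, b, hab⟩ := hF i
    simpa only [List.map_cons, List.prod_cons, hab, mul_assoc] using
      lieSq_le_lieAddLieSq (commutator_mul_self_mul_mem_lieSq a b ((τ.map F).prod * z))
  simpa using add_mem (perm_map_prod_sub_mem hFK hτ 1 z) hsq

end Words

lemma lieAddLieSq_eq_top (h1 : (1 : R) ∈ Ideal.span {z : R | ∃ a b : R, z = a * b - b * a}) :
    lieAddLieSq R = ⊤ := by
  obtain ⟨n, c, k, hsum⟩ := Submodule.mem_span_set'.1 h1
  let F (i : Fin n) : R := k i
  have hword (m : ℕ) : ∀ σ : List (Fin n), n < σ.length + m →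
      ∀ z, (σ.map F).prod * z ∈ lieAddLieSq R := by
    induction m with
    | zero =>
      intro σ hσ
      refine map_prod_mul_mem_of_not_nodup (fun i => (k i).2) fun hnd => ?_
      have := hnd.length_le_card
      simp only [Fintype.card_fin] at this
      omega
    | succ m ih =>
      intro σ hσ z
      have hexp : (σ.map F).prod * z = ∑ i, c i * (((i :: σ).map F).prod * z) := by
        rw [← one_mul ((σ.map F).prod * z), ← hsum, Finset.sum_mul]
        simp only [smul_eq_mul, List.map_cons, List.prod_cons, mul_assoc, F]
      rw [hexp]
      refine sum_mem fun i _ => ?_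
      have hIH := ih (i :: σ) (by simp only [List.length_cons]; omega) (z * c i)
      rw [← mul_assoc] at hIH
      rw [← sub_sub_cancel (((i :: σ).map F).prod * z * c i) (c i * _)]
      exact sub_mem hIH (commutator_mem_lieAddLieSq _ _)
  refine eq_top_iff.2 fun z _ => ?_
  simpa using hword (n + 1) [] (by simp) z

lemma mul_commutator_mem_lieSq {u v : R} (hu : u ∈ lieBr (univ : Set R) univ)
    (hv : v ∈ lieBr (univ : Set R) univ) (x : R) : u * v * x - x * (u * v) ∈ lieSq R := by
  have h : u * v * x - x * (u * v) = u * (v * x - x * v) + (u * x - x * u) * v := by noncomm_ring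
  rw [h]
  exact add_mem (mul_mem_lieSq hu (commutator_mem_lieBr_univ _ _))
    (mul_mem_lieSq (commutator_mem_lieBr_univ _ _) hv)

lemma lieSq_eq_top (h : lieAddLieSq R = ⊤) : lieSq R = ⊤ := by
  have hcomm {x y : R} (hx : x ∈ lieAddLieSq R) (hy : y ∈ lieAddLieSq R) :
      x * y - y * x ∈ lieSq R := by
    have hG : lieAddLieSq R = AddSubgroup.closure (_ ∪ _) := (AddSubgroup.closure_union _ _).symm
    rw [hG] at hx hy
    refine commutator_mem_of_mem_closure ?_ hx hy
    rintro _ (⟨p, -, q, -, rfl⟩ | ⟨u, hu, v, hv, rfl⟩)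
      _ (⟨p', -, q', -, rfl⟩ | ⟨u', hu', v', hv', rfl⟩)
    · exact sub_mem (mul_mem_lieSq (commutator_mem_lieBr_univ _ _) (commutator_mem_lieBr_univ _ _))
        (mul_mem_lieSq (commutator_mem_lieBr_univ _ _) (commutator_mem_lieBr_univ _ _))
    · rw [← neg_sub]
      exact neg_mem (mul_commutator_mem_lieSq hu' hv' _)
    · exact mul_commutator_mem_lieSq hu hv _
    · exact mul_commutator_mem_lieSq hu hv _
  refine eq_top_iff.2 (h ▸ sup_le ((AddSubgroup.closure_le _).2 ?_) le_rfl)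
  rintro _ ⟨x, -, y, -, rfl⟩
  exact hcomm (h ▸ AddSubgroup.mem_top x) (h ▸ AddSubgroup.mem_top y)

lemma one_mem_span_commutators {L : AddSubgroup R}
    (hspan : TwoSidedIdeal.span (lieBr (L : Set R) (L : Set R) : Set R) = ⊤) :
    (1 : R) ∈ Ideal.span {z : R | ∃ a b : R, z = a * b - b * a} := by
  have h1 : (1 : R) ∈ TwoSidedIdeal.span (lieBr (L : Set R) (L : Set R) : Set R) := by
    simp [hspan]
  refine mem_of_mem_span_closure (T := (Ideal.span _).toAddSubgroup) ?_ h1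
  rintro _ ⟨a, -, b, -, rfl⟩ r t
  have h : r * (a * b - b * a) * t = r * ((a * (b * t) - b * t * a) - b * (a * t - t * a)) := by
    noncomm_ring
  rw [Submodule.mem_toAddSubgroup, h]
  refine Ideal.mul_mem_left _ _ (sub_mem (Ideal.subset_span ⟨a, b * t, rfl⟩) ?_)
  exact Ideal.mul_mem_left _ _ (Ideal.subset_span ⟨a, t, rfl⟩)

end IdealOfCommutators

theorem stmt10 {R : Type*} [Ring R]
    (L : AddSubgroup R) (hL : ∀ x ∈ L, ∀ r : R, x * r - r * x ∈ L)
    (hspan : TwoSidedIdeal.span (lieBr (L : Set R) (L : Set R) : Set R) = ⊤) :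
    lieBr (L : Set R) Set.univ = lieBr (Set.univ : Set R) Set.univ ∧
    AddSubgroup.closure {z : R | ∃ u ∈ lieBr (Set.univ : Set R) Set.univ,
        ∃ v ∈ lieBr (Set.univ : Set R) Set.univ, z = u * v} = ⊤ :=
  ⟨lieBr_eq_lieBr_univ hL hspan,
    lieSq_eq_top (lieAddLieSq_eq_top (one_mem_span_commutators hspan))⟩
end

section
/- In any unital ring R, [E(R), R] = [E(R), E(R)]. -/
/-!
For an idempotent `e`, both `e + e x (1 - e)` and `e + (1 - e) x e` are idempotent, and the sum of
their differences with `e` is `⁅e, ⁅e, x⁆⁆`; so `⁅e, ⁅e, x⁆⁆` lies in the additive span `E(R)` of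
the idempotents. Since `⁅e, x⁆ = ⁅e, ⁅e, ⁅e, x⁆⁆⁆`, every `⁅e, x⁆` is a commutator of two elements
of `E(R)`, and `[E(R), R]` is spanned by such `⁅e, x⁆` because the bracket is additive in its first
slot.
-/

open AddSubgroup

section

variable {R : Type*} [Ring R]

lemma lieBr_mono {A A' B B' : Set R} (hA : A ⊆ A') (hB : B ⊆ B') : lieBr A B ≤ lieBr A' B' :=
  closure_mono fun _ ⟨a, ha, b, hb, h⟩ => ⟨a, hA ha, b, hB hb, h⟩

lemma lieBr_closure_left_le (S B : Set R) : lieBr (closure S) B ≤ lieBr S B := by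
  rw [lieBr, closure_le]
  rintro _ ⟨a, ha, b, hb, rfl⟩
  let ad : R →+ R := AddMonoidHom.mulRight b - AddMonoidHom.mulLeft b
  have had : ad a ∈ closure (ad '' S) := ad.map_closure S ▸ mem_map_of_mem ad ha
  refine closure_mono ?_ had
  rintro _ ⟨s, hs, rfl⟩
  exact ⟨s, hs, b, hb, rfl⟩

namespace IsIdempotentElem

variable {e : R}

lemma add_mul_mul_one_sub (he : IsIdempotentElem e) (x : R) :
    IsIdempotentElem (e + e * x * (1 - e)) := by
  simp only [IsIdempotentElem, mul_add, add_mul, mul_sub, sub_mul, mul_one, ← mul_assoc,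
    he.eq, he.mul_mul_self]
  abel

lemma add_one_sub_mul_mul (he : IsIdempotentElem e) (x : R) :
    IsIdempotentElem (e + (1 - e) * x * e) := by
  simp only [IsIdempotentElem, mul_add, add_mul, mul_sub, sub_mul, one_mul, ← mul_assoc,
    he.eq, he.mul_mul_self]
  abel

lemma lie_lie_eq (he : IsIdempotentElem e) (x : R) :
    ⁅e, ⁅e, x⁆⁆ = (e + e * x * (1 - e)) + (e + (1 - e) * x * e) - e - e := by
  simp only [Ring.lie_def, mul_sub, sub_mul, mul_one, one_mul, ← mul_assoc, he.eq,
    he.mul_mul_self]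
  abel

lemma lie_lie_lie (he : IsIdempotentElem e) (x : R) : ⁅e, ⁅e, ⁅e, x⁆⁆⁆ = ⁅e, x⁆ := by
  simp only [Ring.lie_def, mul_sub, sub_mul, ← mul_assoc, he.eq, he.mul_mul_self]
  abel

lemma lie_lie_mem_closure (he : IsIdempotentElem e) (x : R) :
    ⁅e, ⁅e, x⁆⁆ ∈ closure {e : R | IsIdempotentElem e} := by
  have mem {f : R} (hf : IsIdempotentElem f) : f ∈ closure {e : R | IsIdempotentElem e} :=
    subset_closure hf
  rw [he.lie_lie_eq]
  exact sub_mem (sub_mem (add_mem (mem (he.add_mul_mul_one_sub x))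
    (mem (he.add_one_sub_mul_mul x))) (mem he)) (mem he)

lemma mul_sub_mul_mem_lieBr (he : IsIdempotentElem e) (x : R) :
    e * x - x * e ∈ lieBr (closure {e : R | IsIdempotentElem e} : Set R)
      (closure {e : R | IsIdempotentElem e} : Set R) :=
  subset_closure ⟨e, subset_closure he, ⁅e, ⁅e, x⁆⁆, he.lie_lie_mem_closure x,
    by rw [← Ring.lie_def, ← Ring.lie_def, he.lie_lie_lie]⟩

end IsIdempotentElem

end

theorem stmt11 {R : Type*} [Ring R] :
    lieBr ((AddSubgroup.closure {e : R | IsIdempotentElem e} : AddSubgroup R) : Set R) Set.univ =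
    lieBr ((AddSubgroup.closure {e : R | IsIdempotentElem e} : AddSubgroup R) : Set R)
      ((AddSubgroup.closure {e : R | IsIdempotentElem e} : AddSubgroup R) : Set R) := by
  refine le_antisymm ?_ (lieBr_mono subset_rfl (Set.subset_univ _))
  refine (lieBr_closure_left_le _ _).trans ?_
  rw [lieBr, closure_le]
  rintro _ ⟨e, he, x, -, rfl⟩
  exact he.mul_sub_mul_mem_lieBr x
end
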